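/- arXiv:2009.11762 — 2 statements merged into one kernel-verified Lean document; each statement's English description precedes it below -/
import Mathlib

section
/- For any two probability measures P and Q on a measurable space and any integer n ≥ 1, the total variation distance between the n-fold product measures satisfies δ(P^n, Q^n) ≤ 1 - (1 - δ(P,Q))^n. -/
open MeasureTheory

/-- Total variation distance between two measures:
sup over measurable sets of |P(A) - Q(A)|. -/
noncomputable def tvDist {Ω : Type*} [MeasurableSpace Ω] (P Q : Measure Ω) : ℝ :=
  ⨆ A : {A : Set Ω // MeasurableSet A}, |(P A.1).toReal - (Q A.1).toReal|

/-!
By the Hahn decomposition, `P` and `Q` both dominate a common measure `ν` (equal to `P` where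
`P ≤ Q` and to `Q` elsewhere) of mass at least `1 - δ(P, Q)`. Then `νⁿ` is dominated by both
`Pⁿ` and `Qⁿ` and has mass at least `(1 - δ(P, Q))ⁿ`, and two probability measures dominating a
common measure of mass `c` are at total variation distance at most `1 - c`.
-/

open Set

namespace MeasureTheory.Measure

theorem pi_fin_mono {n : ℕ} {α : Fin n → Type*} [∀ i, MeasurableSpace (α i)]
    {μ ν : ∀ i, Measure (α i)} [∀ i, SigmaFinite (μ i)] [∀ i, SigmaFinite (ν i)]
    (h : ∀ i, μ i ≤ ν i) : Measure.pi μ ≤ Measure.pi ν := by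
  induction n with
  | zero => rw [pi_of_empty, pi_of_empty]
  | succ n ih =>
    have hμ := (measurePreserving_piFinSuccAbove μ 0).map_eq
    have hν := (measurePreserving_piFinSuccAbove ν 0).map_eq
    have hprod := prod_mono (h 0) (ih fun i => h (Fin.succAbove 0 i))
    rw [← hμ, ← hν] at hprod
    simpa only [MeasurableEquiv.map_symm_map] using
      map_mono hprod (MeasurableEquiv.piFinSuccAbove α 0).symm.measurable

theorem pi_mono {ι : Type*} [Fintype ι] {α : ι → Type*} [∀ i, MeasurableSpace (α i)]
    {μ ν : ∀ i, Measure (α i)} [∀ i, SigmaFinite (μ i)] [∀ i, SigmaFinite (ν i)]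
    (h : ∀ i, μ i ≤ ν i) : Measure.pi μ ≤ Measure.pi ν := by
  rw [← pi_map_piCongrLeft (Fintype.equivFin ι).symm μ,
    ← pi_map_piCongrLeft (Fintype.equivFin ι).symm ν]
  exact map_mono (pi_fin_mono fun _ => h _) (MeasurableEquiv.measurable _)

end MeasureTheory.Measure

section TotalVariation

variable {Ω : Type*} [MeasurableSpace Ω] {P Q ν : Measure Ω}

theorem measureReal_sub_le_one_sub_of_le [IsProbabilityMeasure P] (h : ν ≤ P) {A : Set Ω}
    (hA : MeasurableSet A) : P.real A - ν.real A ≤ 1 - ν.real univ := by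
  have : IsFiniteMeasure ν := isFiniteMeasure_of_le P h
  have hP := probReal_add_probReal_compl (μ := P) hA
  have hν := measureReal_add_measureReal_compl (μ := ν) hA
  have hAc : ν.real Aᶜ ≤ P.real Aᶜ := ENNReal.toReal_mono (measure_ne_top _ _) (h _)
  linarith

theorem tvDist_le_one_sub_of_le [IsProbabilityMeasure P] [IsProbabilityMeasure Q]
    (hP : ν ≤ P) (hQ : ν ≤ Q) : tvDist P Q ≤ 1 - ν.real univ := by
  refine ciSup_le fun ⟨A, hA⟩ => ?_
  change |P.real A - Q.real A| ≤ _
  refine abs_sub_le_iff.2 ⟨?_, ?_⟩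
  · have hνQ : ν.real A ≤ Q.real A := ENNReal.toReal_mono (measure_ne_top _ _) (hQ _)
    linarith [measureReal_sub_le_one_sub_of_le hP hA]
  · have hνP : ν.real A ≤ P.real A := ENNReal.toReal_mono (measure_ne_top _ _) (hP _)
    linarith [measureReal_sub_le_one_sub_of_le hQ hA]

theorem tvDist_le_one [IsProbabilityMeasure P] [IsProbabilityMeasure Q] : tvDist P Q ≤ 1 := by
  simpa using tvDist_le_one_sub_of_le (Measure.zero_le P) (Measure.zero_le Q)

theorem abs_measureReal_sub_le_tvDist [IsProbabilityMeasure P] [IsProbabilityMeasure Q]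
    {A : Set Ω} (hA : MeasurableSet A) : |P.real A - Q.real A| ≤ tvDist P Q := by
  refine le_ciSup (f := fun A : {A : Set Ω // MeasurableSet A} => |P.real A - Q.real A|)
    ⟨1, ?_⟩ ⟨A, hA⟩
  rintro _ ⟨B, rfl⟩
  have hP : P.real B ≤ 1 := measureReal_le_one
  have hQ : Q.real B ≤ 1 := measureReal_le_one
  exact abs_sub_le_iff.2 ⟨by linarith [measureReal_nonneg (μ := Q) (s := B.1)],
    by linarith [measureReal_nonneg (μ := P) (s := B.1)]⟩

theorem exists_common_le_one_sub_tvDist_le [IsProbabilityMeasure P] [IsProbabilityMeasure Q] :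
    ∃ ν : Measure Ω, ν ≤ P ∧ ν ≤ Q ∧ 1 - tvDist P Q ≤ ν.real univ := by
  obtain ⟨s, hs, hPQ, hQP⟩ := exists_isHahnDecomposition P Q
  refine ⟨P.restrict s + Q.restrict sᶜ, ?_, ?_, ?_⟩
  · calc P.restrict s + Q.restrict sᶜ ≤ P.restrict s + P.restrict sᶜ := by gcongr
      _ = P := Measure.restrict_add_restrict_compl hs
  · calc P.restrict s + Q.restrict sᶜ ≤ Q.restrict s + Q.restrict sᶜ := by gcongr
      _ = Q := Measure.restrict_add_restrict_compl hs
  · have hδ := abs_measureReal_sub_le_tvDist (P := P) (Q := Q) hs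
    have hQ := probReal_add_probReal_compl (μ := Q) hs
    rw [measureReal_add_apply, measureReal_restrict_apply_univ, measureReal_restrict_apply_univ]
    linarith [abs_sub_le_iff.1 hδ]

end TotalVariation

theorem stmt0_general {Ω : Type*} [MeasurableSpace Ω] (P Q : Measure Ω)
    [IsProbabilityMeasure P] [IsProbabilityMeasure Q] (n : ℕ) :
    tvDist (Measure.pi fun _ : Fin n => P) (Measure.pi fun _ : Fin n => Q)
      ≤ 1 - (1 - tvDist P Q) ^ n := by
  obtain ⟨ν, hνP, hνQ, hν⟩ := exists_common_le_one_sub_tvDist_le (P := P) (Q := Q)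
  have : IsFiniteMeasure ν := isFiniteMeasure_of_le P hνP
  have hpi := tvDist_le_one_sub_of_le (Measure.pi_mono fun _ : Fin n => hνP)
    (Measure.pi_mono fun _ : Fin n => hνQ)
  have hmass : (Measure.pi fun _ : Fin n => ν).real univ = ν.real univ ^ n := by
    simp [Measure.real, Measure.pi_univ, ENNReal.toReal_pow]
  have hpow : (1 - tvDist P Q) ^ n ≤ ν.real univ ^ n :=
    pow_le_pow_left₀ (sub_nonneg.2 tvDist_le_one) hν n
  linarith

theorem stmt0 {Ω : Type*} [MeasurableSpace Ω] (P Q : Measure Ω)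
    [IsProbabilityMeasure P] [IsProbabilityMeasure Q] (n : ℕ) (hn : 1 ≤ n) :
    tvDist (Measure.pi fun _ : Fin n => P) (Measure.pi fun _ : Fin n => Q)
      ≤ 1 - (1 - tvDist P Q) ^ n :=
  stmt0_general P Q n
end

section
/- Let H₀ and H₁ be probability measures on ℝ^m, and let A be Haar-uniform on O(m). Suppose an estimator observing n i.i.d. samples outputs, when the data comes from H₀, a point in the (θ,A)-ball with probability θ, and, when observing n i.i.d. samples from H₁, succeeds in recovering A with tolerance θ with probability p. Then p ≤ δ(H₀ⁿ, H₁ⁿ) + θ. -/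
open MeasureTheory ProbabilityTheory Matrix

noncomputable instance (m : ℕ) : MeasurableSpace (Matrix (Fin m) (Fin m) ℝ) :=
  MeasurableSpace.pi

/-- The orthogonal group O(m) of m×m real orthogonal matrices. -/
abbrev OG (m : ℕ) : Type := Matrix.orthogonalGroup (Fin m) ℝ

/-- The standard Gaussian measure N(0, I_m) on ℝ^m, as the m-fold product of N(0,1). -/
noncomputable def stdGaussian (m : ℕ) : Measure (Fin m → ℝ) :=
  Measure.pi fun _ => gaussianReal 0 1

/-- Frobenius distance between two matrices. -/
noncomputable def frobDist {m : ℕ} (M A : Matrix (Fin m) (Fin m) ℝ) : ℝ :=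
  Real.sqrt (∑ i, ∑ j, (M i j - A i j) ^ 2)

/-- Frobenius ball of radius δ around A inside O(m). -/
def ogBall {m : ℕ} (δ : ℝ) (A : OG m) : Set (OG m) :=
  {M | frobDist (M : Matrix (Fin m) (Fin m) ℝ) (A : Matrix (Fin m) (Fin m) ℝ) ≤ δ}

/-- The radius δ* of the (θ,A)-ball: the least radius whose ball has Haar measure ≥ θ. -/
noncomputable def deltaStar {m : ℕ} (μ : Measure (OG m)) (θ : ℝ) (A : OG m) : ℝ :=
  sInf {δ : ℝ | ENNReal.ofReal θ ≤ μ (ogBall δ A)}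

/-- The (θ,A)-ball in O(m) with respect to the (Haar) measure μ. -/
noncomputable def thetaBall {m : ℕ} (μ : Measure (OG m)) (θ : ℝ) (A : OG m) : Set (OG m) :=
  ogBall (deltaStar μ θ A) A


section AuxLemmas

lemma sq_sum_eq {m : ℕ} (C : Matrix (Fin m) (Fin m) ℝ) :
    ∑ i, ∑ j, (C i j)^2 = (star C * C).trace := by
  rw [Finset.sum_comm]
  simp [Matrix.trace, Matrix.diag, Matrix.mul_apply, Matrix.star_apply, sq]

lemma frob_mul_left {m : ℕ} (A : OG m) (M N : Matrix (Fin m) (Fin m) ℝ) :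
    frobDist ((A : Matrix (Fin m) (Fin m) ℝ) * M) ((A : Matrix (Fin m) (Fin m) ℝ) * N)
      = frobDist M N := by
  unfold frobDist
  congr 1
  have h1 : ∀ (X Y : Matrix (Fin m) (Fin m) ℝ),
      ∑ i, ∑ j, (X i j - Y i j)^2 = (star (X - Y) * (X - Y)).trace := by
    intro X Y
    rw [← sq_sum_eq]
    simp [Matrix.sub_apply]
  rw [h1, h1, ← Matrix.mul_sub]
  have hA : star (A : Matrix (Fin m) (Fin m) ℝ) * (A : Matrix (Fin m) (Fin m) ℝ) = 1 :=
    A.2.1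
  rw [StarMul.star_mul, mul_assoc, ← mul_assoc (star (A : Matrix (Fin m) (Fin m) ℝ)), hA,
    one_mul]

lemma meas_coe {m : ℕ} : Measurable (fun A : OG m => (A : Matrix (Fin m) (Fin m) ℝ)) :=
  measurable_subtype_coe

lemma meas_frob_to {m : ℕ} (A : OG m) :
    Measurable (fun M : OG m => frobDist (M : Matrix (Fin m) (Fin m) ℝ)
      (A : Matrix (Fin m) (Fin m) ℝ)) := by
  unfold frobDist
  apply Real.continuous_sqrt.measurable.comp
  apply Finset.measurable_sum
  intro i _
  apply Finset.measurable_sum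
  intro j _
  have h1 : Measurable fun M : OG m => (M : Matrix (Fin m) (Fin m) ℝ) i j :=
    (measurable_pi_apply j).comp ((measurable_pi_apply i).comp meas_coe)
  exact (h1.sub measurable_const).pow_const 2

lemma meas_ogBall {m : ℕ} (δ : ℝ) (A : OG m) : MeasurableSet (ogBall δ A) :=
  (meas_frob_to A) measurableSet_Iic

lemma meas_mul_left {m : ℕ} (A : OG m) : Measurable (fun V : OG m => A * V) := by
  apply Measurable.subtype_mk
  have : Measurable fun V : OG m =>
      (A : Matrix (Fin m) (Fin m) ℝ) * (V : Matrix (Fin m) (Fin m) ℝ) := by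
    apply measurable_pi_lambda
    intro i
    apply measurable_pi_lambda
    intro j
    simp only [Matrix.mul_apply]
    apply Finset.measurable_sum
    intro k _
    exact ((measurable_pi_apply j).comp ((measurable_pi_apply k).comp meas_coe)).const_mul _
  exact this

lemma ogBall_meas_const {m : ℕ} (μ : Measure (OG m))
    (hInv : ∀ U : OG m, μ.map (fun V => U * V) = μ) (δ : ℝ) (A : OG m) :
    μ (ogBall δ A) = μ (ogBall δ 1) := by
  conv_lhs => rw [← hInv A]
  rw [Measure.map_apply (meas_mul_left A) (meas_ogBall δ A)]
  congr 1
  ext V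
  simp only [Set.mem_preimage, ogBall, Set.mem_setOf_eq]
  have : ((A * V : OG m) : Matrix (Fin m) (Fin m) ℝ)
      = (A : Matrix (Fin m) (Fin m) ℝ) * (V : Matrix (Fin m) (Fin m) ℝ) := rfl
  rw [this]
  have h1 : ((1 : OG m) : Matrix (Fin m) (Fin m) ℝ) = 1 := rfl
  rw [h1]
  have key : frobDist ((A : Matrix (Fin m) (Fin m) ℝ) * (V : Matrix (Fin m) (Fin m) ℝ))
      (A : Matrix (Fin m) (Fin m) ℝ) = frobDist (V : Matrix (Fin m) (Fin m) ℝ) 1 := by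
    have h2 := frob_mul_left A (V : Matrix (Fin m) (Fin m) ℝ) 1
    rwa [mul_one] at h2
  rw [key]

lemma deltaStar_const {m : ℕ} (μ : Measure (OG m))
    (hInv : ∀ U : OG m, μ.map (fun V => U * V) = μ) (θ : ℝ) (A : OG m) :
    deltaStar μ θ A = deltaStar μ θ 1 := by
  unfold deltaStar
  congr 1
  ext δ
  simp [ogBall_meas_const μ hInv δ A]

lemma thetaBall_eq {m : ℕ} (μ : Measure (OG m))
    (hInv : ∀ U : OG m, μ.map (fun V => U * V) = μ) (θ : ℝ) (A : OG m) :
    thetaBall μ θ A = {M : OG m | frobDist (M : Matrix (Fin m) (Fin m) ℝ)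
      (A : Matrix (Fin m) (Fin m) ℝ) ≤ deltaStar μ θ 1} := by
  rw [thetaBall, deltaStar_const μ hInv θ A]
  rfl

end AuxLemmas

/-- Main Theorem: if an estimator observing n i.i.d. samples from H₀ lands in the
(θ,A)-ball with probability exactly θ (A Haar-uniform), and observing n i.i.d. samples
from H₁ it succeeds with probability p, then p ≤ δ(H₀ⁿ, H₁ⁿ) + θ. -/
theorem stmt13 {m n : ℕ} (μ : Measure (OG m)) [IsProbabilityMeasure μ]
    (hInv : ∀ U : OG m, μ.map (fun V => U * V) = μ)
    (H0 H1 : Measure (Fin m → ℝ)) [IsProbabilityMeasure H0] [IsProbabilityMeasure H1]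
    (θ p : ℝ) (hθ : θ ∈ Set.Ioc (0 : ℝ) 1) (hp : p ∈ Set.Icc (0 : ℝ) 1)
    (E : (Fin n → Fin m → ℝ) → OG m) (hE : Measurable E)
    (h0 : (μ.prod (Measure.pi fun _ : Fin n => H0))
        {q | E q.2 ∈ thetaBall μ θ q.1} = ENNReal.ofReal θ)
    (h1 : (μ.prod (Measure.pi fun _ : Fin n => H1))
        {q | E q.2 ∈ thetaBall μ θ q.1} = ENNReal.ofReal p) :
    p ≤ tvDist (Measure.pi fun _ : Fin n => H0) (Measure.pi fun _ : Fin n => H1) + θ := by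
  classical
  set P0 : Measure (Fin n → Fin m → ℝ) := Measure.pi fun _ : Fin n => H0 with hP0
  set P1 : Measure (Fin n → Fin m → ℝ) := Measure.pi fun _ : Fin n => H1 with hP1
  have hP0prob : IsProbabilityMeasure P0 := by rw [hP0]; infer_instance
  have hP1prob : IsProbabilityMeasure P1 := by rw [hP1]; infer_instance
  set tv : ℝ := tvDist P0 P1 with htv
  have tvnn : 0 ≤ tv := Real.iSup_nonneg fun _ => abs_nonneg _
  -- joint measurability of the success event
  set c : ℝ := deltaStar μ θ 1 with hc
  have hmeasf : Measurable (fun q : OG m × (Fin n → Fin m → ℝ) =>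
      frobDist ((E q.2 : Matrix (Fin m) (Fin m) ℝ)) ((q.1 : Matrix (Fin m) (Fin m) ℝ))) := by
    unfold frobDist
    apply Real.continuous_sqrt.measurable.comp
    apply Finset.measurable_sum
    intro i _
    apply Finset.measurable_sum
    intro j _
    have h1 : Measurable fun q : OG m × (Fin n → Fin m → ℝ) =>
        ((E q.2 : Matrix (Fin m) (Fin m) ℝ)) i j :=
      (measurable_pi_apply j).comp ((measurable_pi_apply i).comp
        (meas_coe.comp (hE.comp measurable_snd)))
    have h2 : Measurable fun q : OG m × (Fin n → Fin m → ℝ) =>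
        ((q.1 : Matrix (Fin m) (Fin m) ℝ)) i j :=
      (measurable_pi_apply j).comp ((measurable_pi_apply i).comp
        (meas_coe.comp measurable_fst))
    exact (h1.sub h2).pow_const 2
  have hSeq : {q : OG m × (Fin n → Fin m → ℝ) | E q.2 ∈ thetaBall μ θ q.1}
      = (fun q : OG m × (Fin n → Fin m → ℝ) =>
          frobDist ((E q.2 : Matrix (Fin m) (Fin m) ℝ))
            ((q.1 : Matrix (Fin m) (Fin m) ℝ))) ⁻¹' Set.Iic c := by
    ext q
    rw [Set.mem_setOf_eq, thetaBall_eq μ hInv θ q.1]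
    rfl
  have hS : MeasurableSet {q : OG m × (Fin n → Fin m → ℝ) | E q.2 ∈ thetaBall μ θ q.1} := by
    rw [hSeq]; exact hmeasf measurableSet_Iic
  -- slices
  have hsliceMeas : ∀ A : OG m, MeasurableSet (E ⁻¹' thetaBall μ θ A) := by
    intro A
    apply hE
    rw [thetaBall_eq μ hInv θ A]
    exact meas_frob_to A measurableSet_Iic
  have hslice : ∀ A : OG m, (Prod.mk A ⁻¹'
      {q : OG m × (Fin n → Fin m → ℝ) | E q.2 ∈ thetaBall μ θ q.1})
      = E ⁻¹' thetaBall μ θ A := by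
    intro A; rfl
  have e0 : ∫⁻ A, P0 (E ⁻¹' thetaBall μ θ A) ∂μ = ENNReal.ofReal θ := by
    rw [← h0, Measure.prod_apply hS]
    refine lintegral_congr fun A => by rw [hslice A]
  have e1 : ∫⁻ A, P1 (E ⁻¹' thetaBall μ θ A) ∂μ = ENNReal.ofReal p := by
    rw [← h1, Measure.prod_apply hS]
    refine lintegral_congr fun A => by rw [hslice A]
  -- pointwise TV bound
  have hpt : ∀ A : OG m, P1 (E ⁻¹' thetaBall μ θ A)
      ≤ P0 (E ⁻¹' thetaBall μ θ A) + ENNReal.ofReal tv := by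
    intro A
    set s : Set (Fin n → Fin m → ℝ) := E ⁻¹' thetaBall μ θ A with hs
    have hsm : MeasurableSet s := hsliceMeas A
    have hbdd : BddAbove (Set.range fun A' : {A : Set (Fin n → Fin m → ℝ) // MeasurableSet A}
        => |(P0 A'.1).toReal - (P1 A'.1).toReal|) := by
      refine ⟨2, ?_⟩
      rintro x ⟨t, rfl⟩
      have h0' : (P0 t.1).toReal ≤ 1 := by
        have := prob_le_one (μ := P0) (s := t.1)
        simpa using ENNReal.toReal_mono ENNReal.one_ne_top this
      have h1' : (P1 t.1).toReal ≤ 1 := by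
        have := prob_le_one (μ := P1) (s := t.1)
        simpa using ENNReal.toReal_mono ENNReal.one_ne_top this
      have h0n : (0:ℝ) ≤ (P0 t.1).toReal := ENNReal.toReal_nonneg
      have h1n : (0:ℝ) ≤ (P1 t.1).toReal := ENNReal.toReal_nonneg
      rw [abs_sub_le_iff]
      constructor <;> linarith
    have htvge : |(P0 s).toReal - (P1 s).toReal| ≤ tv := by
      rw [htv, tvDist]
      exact le_ciSup hbdd ⟨s, hsm⟩
    have hreal : (P1 s).toReal ≤ (P0 s).toReal + tv := by
      have := le_abs_self ((P1 s).toReal - (P0 s).toReal)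
      rw [abs_sub_comm] at this
      linarith [this.trans htvge]
    calc P1 s = ENNReal.ofReal (P1 s).toReal :=
          (ENNReal.ofReal_toReal (measure_ne_top _ _)).symm
      _ ≤ ENNReal.ofReal ((P0 s).toReal + tv) := ENNReal.ofReal_le_ofReal hreal
      _ = ENNReal.ofReal (P0 s).toReal + ENNReal.ofReal tv :=
          ENNReal.ofReal_add ENNReal.toReal_nonneg tvnn
      _ = P0 s + ENNReal.ofReal tv := by
          rw [ENNReal.ofReal_toReal (measure_ne_top _ _)]
  -- integrate
  have hmain : ENNReal.ofReal p ≤ ENNReal.ofReal θ + ENNReal.ofReal tv := by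
    rw [← e0, ← e1]
    calc ∫⁻ A, P1 (E ⁻¹' thetaBall μ θ A) ∂μ
        ≤ ∫⁻ A, (P0 (E ⁻¹' thetaBall μ θ A) + ENNReal.ofReal tv) ∂μ :=
          lintegral_mono hpt
      _ = (∫⁻ A, P0 (E ⁻¹' thetaBall μ θ A) ∂μ) + ∫⁻ _, ENNReal.ofReal tv ∂μ :=
          lintegral_add_right _ measurable_const
      _ = (∫⁻ A, P0 (E ⁻¹' thetaBall μ θ A) ∂μ) + ENNReal.ofReal tv := by
          rw [lintegral_const, measure_univ, mul_one]
  have hfin : ENNReal.ofReal p ≤ ENNReal.ofReal (tv + θ) := by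
    rw [ENNReal.ofReal_add tvnn (le_of_lt hθ.1)]
    rwa [add_comm (ENNReal.ofReal tv)]
  have := (ENNReal.ofReal_le_ofReal_iff (by linarith [hθ.1.le] : (0:ℝ) ≤ tv + θ)).mp hfin
  linarith
end
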